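/- arXiv:0903.1174 — 3 statements merged into one kernel-verified Lean document; each statement's English description precedes it below -/
import Mathlib

section
/- Let 0 ≤ α < β with β - α < 1. Then the function q_{α,β}(u) = (e^{-αu} - e^{-βu})/(1 - e^{-u}) for u ≠ 0, with q_{α,β}(0) = β - α, is logarithmically concave on all of ℝ, i.e., ln q_{α,β} is concave. -/
/-!
With γ = β - α, factoring `exp` of the midpoint out of both differences of exponentials gives
`q α β u = exp ((1 - α - β) u / 2) · sinh (γ u / 2) / sinh (u / 2)`, so it suffices that
`t ↦ log (sinh (γ t) / sinh t)` is concave. This function is even, and the single inequality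
`sinh (γ t) ≤ γ sinh t` for `t ≥ 0` (convexity of `sinh` on `[0, ∞)`, since `sinh 0 = 0`) shows
both that it is maximal at `0` and that its second derivative `1 / sinh² t - γ² / sinh² (γ t)`
is nonpositive for `t > 0`. Concavity on the two half-lines then glues at the maximum.
-/

noncomputable def q (α β u : ℝ) : ℝ :=
  if u = 0 then β - α else (Real.exp (-α * u) - Real.exp (-β * u)) / (1 - Real.exp (-u))

open Real Set

lemma concaveOn_univ_of_Iic_Ici {f : ℝ → ℝ} {a : ℝ} (hl : ConcaveOn ℝ (Iic a) f)
    (hr : ConcaveOn ℝ (Ici a) f) (hmax : ∀ x, f x ≤ f a) : ConcaveOn ℝ univ f := by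
  rw [concaveOn_iff_slope_anti_adjacent]
  refine ⟨convex_univ, fun {x y z} _ _ hxy hyz => ?_⟩
  rcases le_or_gt z a with hza | haz
  · exact hl.slope_anti_adjacent (mem_Iic.2 (by linarith)) (mem_Iic.2 hza) hxy hyz
  rcases le_or_gt a x with hax | hxa
  · exact hr.slope_anti_adjacent (mem_Ici.2 hax) (mem_Ici.2 (by linarith)) hxy hyz
  have hx := hmax x
  have hy := hmax y
  have hz := hmax z
  rcases lt_trichotomy y a with hya | rfl | hay
  · calc (f z - f y) / (z - y) ≤ (f a - f y) / (a - y) :=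
          div_le_div₀ (by linarith) (by linarith) (by linarith) (by linarith)
      _ ≤ (f y - f x) / (y - x) :=
          hl.slope_anti_adjacent (mem_Iic.2 hxa.le) self_mem_Iic hxy hya
  · exact (div_nonpos_of_nonpos_of_nonneg (by linarith) (by linarith)).trans
      (div_nonneg (by linarith) (by linarith))
  · calc (f z - f y) / (z - y) ≤ (f y - f a) / (y - a) :=
          hr.slope_anti_adjacent self_mem_Ici (mem_Ici.2 haz.le) hay hyz
      _ ≤ (f y - f x) / (y - x) := by
        rw [div_le_div_iff₀ (by linarith) (by linarith)]
        nlinarith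

lemma Real.convexOn_sinh : ConvexOn ℝ (Ici 0) sinh :=
  convexOn_of_deriv2_nonneg' (convex_Ici 0) differentiable_sinh.differentiableOn
    (by simpa only [deriv_sinh] using differentiable_cosh.differentiableOn)
    (fun x hx => by simpa [deriv_sinh, deriv_cosh] using sinh_nonneg_iff.2 hx)

lemma Real.sinh_mul_le_mul_sinh {c t : ℝ} (hc₀ : 0 ≤ c) (hc₁ : c ≤ 1) (ht : 0 ≤ t) :
    sinh (c * t) ≤ c * sinh t := by
  simpa using convexOn_sinh.2 (mem_Ici.2 ht) self_mem_Ici hc₀ (sub_nonneg.2 hc₁)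
    (add_sub_cancel c 1)

lemma Real.exp_sub_exp_eq_mul_sinh (a b : ℝ) :
    exp a - exp b = 2 * exp ((a + b) / 2) * sinh ((a - b) / 2) := by
  rw [sinh_eq, show ∀ m d : ℝ, 2 * exp m * ((exp d - exp (-d)) / 2)
      = exp (m + d) - exp (m + -d) by intro m d; rw [exp_add, exp_add]; ring]
  ring_nf

lemma Differentiable.continuous_dslope {𝕜 E : Type*} [NontriviallyNormedField 𝕜]
    [NormedAddCommGroup E] [NormedSpace 𝕜 E] {f : 𝕜 → E} (hf : Differentiable 𝕜 f) (a : 𝕜) :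
    Continuous (dslope f a) :=
  continuousOn_univ.1 ((continuousOn_dslope Filter.univ_mem).2 ⟨hf.continuous.continuousOn, hf a⟩)

noncomputable def sinhRatio (γ t : ℝ) : ℝ := if t = 0 then γ else sinh (γ * t) / sinh t

lemma sinhRatio_of_ne_zero (γ : ℝ) {t : ℝ} (ht : t ≠ 0) : sinhRatio γ t = sinh (γ * t) / sinh t :=
  if_neg ht

lemma sinhRatio_neg (γ t : ℝ) : sinhRatio γ (-t) = sinhRatio γ t := by
  simp only [sinhRatio, neg_eq_zero, mul_neg, sinh_neg, neg_div_neg_eq]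

lemma sinhRatio_abs (γ t : ℝ) : sinhRatio γ |t| = sinhRatio γ t := by
  rcases abs_choice t with h | h <;> rw [h]
  exact sinhRatio_neg γ t

lemma sinhRatio_eq_dslope (γ t : ℝ) :
    sinhRatio γ t = dslope (fun t => sinh (γ * t)) 0 t / dslope sinh 0 t := by
  rcases eq_or_ne t 0 with rfl | ht
  · have h := ((hasDerivAt_sinh _).comp 0 ((hasDerivAt_id 0).const_mul γ)).deriv
    simp_all [sinhRatio, Function.comp_def]
  · rw [sinhRatio_of_ne_zero γ ht, dslope_of_ne _ ht, dslope_of_ne _ ht, slope_def_field,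
      slope_def_field]
    simp only [mul_zero, sinh_zero, sub_zero]
    rw [div_div_div_cancel_right₀ ht]

lemma continuous_sinhRatio (γ : ℝ) : Continuous (sinhRatio γ) := by
  have hne : ∀ t, dslope sinh 0 t ≠ 0 := by
    intro t
    rcases eq_or_ne t 0 with rfl | ht
    · simp [dslope_same, Real.deriv_sinh]
    · rw [dslope_of_ne _ ht, slope_def_field]
      simpa using ht
  rw [funext (sinhRatio_eq_dslope γ)]
  exact ((differentiable_sinh.comp (differentiable_id.const_mul γ)).continuous_dslope 0).div
    (differentiable_sinh.continuous_dslope 0) hne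

lemma sinhRatio_pos {γ : ℝ} (hγ : 0 < γ) (t : ℝ) : 0 < sinhRatio γ t := by
  rw [← sinhRatio_abs]
  rcases (abs_nonneg t).eq_or_lt' with h | h
  · rw [h, sinhRatio, if_pos rfl]
    exact hγ
  · rw [sinhRatio_of_ne_zero γ h.ne']
    exact div_pos (sinh_pos_iff.2 (mul_pos hγ h)) (sinh_pos_iff.2 h)

lemma sinhRatio_le {γ : ℝ} (hγ₀ : 0 ≤ γ) (hγ₁ : γ ≤ 1) (t : ℝ) : sinhRatio γ t ≤ γ := by
  rw [← sinhRatio_abs]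
  rcases (abs_nonneg t).eq_or_lt' with h | h
  · rw [h, sinhRatio, if_pos rfl]
  · rw [sinhRatio_of_ne_zero γ h.ne', div_le_iff₀ (sinh_pos_iff.2 h)]
    exact sinh_mul_le_mul_sinh hγ₀ hγ₁ h.le

lemma hasDerivAt_log_sinh_mul (c : ℝ) {t : ℝ} (h : sinh (c * t) ≠ 0) :
    HasDerivAt (fun t => log (sinh (c * t))) (c * cosh (c * t) / sinh (c * t)) t := by
  have := ((hasDerivAt_sinh _).comp t ((hasDerivAt_id t).const_mul c)).log h
  simpa [mul_comm] using this

lemma hasDerivAt_mul_cosh_div_sinh_mul (c : ℝ) {t : ℝ} (h : sinh (c * t) ≠ 0) :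
    HasDerivAt (fun t => c * cosh (c * t) / sinh (c * t)) (-c ^ 2 / sinh (c * t) ^ 2) t := by
  have hlin := (hasDerivAt_id t).const_mul c
  have := (((hasDerivAt_cosh _).comp t hlin).const_mul c).div
    ((hasDerivAt_sinh _).comp t hlin) h
  refine this.congr_deriv ?_
  simp only [Function.comp_apply, id, mul_one]
  field_simp
  rw [cosh_sq]
  ring

lemma concaveOn_log_sinhRatio_Ici {γ : ℝ} (hγ₀ : 0 < γ) (hγ₁ : γ ≤ 1) :
    ConcaveOn ℝ (Ici 0) (fun t => log (sinhRatio γ t)) := by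
  have hsinh : ∀ c t : ℝ, 0 < c → 0 < t → sinh (c * t) ≠ 0 := fun c t hc ht =>
    (sinh_pos_iff.2 (mul_pos hc ht)).ne'
  refine concaveOn_of_hasDerivWithinAt2_nonpos (convex_Ici 0)
    (f' := fun t => γ * cosh (γ * t) / sinh (γ * t) - 1 * cosh (1 * t) / sinh (1 * t))
    (f'' := fun t => -γ ^ 2 / sinh (γ * t) ^ 2 - -1 ^ 2 / sinh (1 * t) ^ 2)
    ((continuous_sinhRatio γ).continuousOn.log fun t _ => (sinhRatio_pos hγ₀ t).ne')
    ?_ ?_ ?_ <;> rw [interior_Ici] <;> intro t (ht : 0 < t)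
  · have heq : EqOn (fun t => log (sinhRatio γ t))
        (fun t => log (sinh (γ * t)) - log (sinh (1 * t))) (Ioi 0) := fun s (hs : 0 < s) => by
      dsimp only
      rw [sinhRatio_of_ne_zero γ hs.ne', log_div (hsinh γ s hγ₀ hs) (sinh_ne_zero.2 hs.ne'),
        one_mul]
    exact (((hasDerivAt_log_sinh_mul γ (hsinh γ t hγ₀ ht)).sub
      (hasDerivAt_log_sinh_mul 1 (hsinh 1 t one_pos ht))).hasDerivWithinAt).congr heq (heq ht)
  · exact ((hasDerivAt_mul_cosh_div_sinh_mul γ (hsinh γ t hγ₀ ht)).sub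
      (hasDerivAt_mul_cosh_div_sinh_mul 1 (hsinh 1 t one_pos ht))).hasDerivWithinAt
  · have hpos := sinh_pos_iff.2 (mul_pos hγ₀ ht)
    have hle := sinh_mul_le_mul_sinh hγ₀.le hγ₁ ht.le
    simp only [one_mul, one_pow, neg_div, sub_neg_eq_add, neg_add_le_iff_le_add, add_zero]
    rw [div_le_div_iff₀ (by positivity) (by positivity)]
    nlinarith

lemma concaveOn_log_sinhRatio {γ : ℝ} (hγ₀ : 0 < γ) (hγ₁ : γ ≤ 1) :
    ConcaveOn ℝ univ (fun t => log (sinhRatio γ t)) := by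
  have hr := concaveOn_log_sinhRatio_Ici hγ₀ hγ₁
  refine concaveOn_univ_of_Iic_Ici (a := 0) ?_ hr fun t => ?_
  · have hl := hr.comp_linearMap (-LinearMap.id)
    have hs : (-LinearMap.id : ℝ →ₗ[ℝ] ℝ) ⁻¹' Ici 0 = Iic 0 := by ext; simp
    have hf : (fun t => log (sinhRatio γ t)) ∘ (-LinearMap.id : ℝ →ₗ[ℝ] ℝ)
        = fun t => log (sinhRatio γ t) := by ext; simp [sinhRatio_neg]
    rwa [hs, hf] at hl
  · have h0 : sinhRatio γ 0 = γ := if_pos rfl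
    rw [h0]
    exact log_le_log (sinhRatio_pos hγ₀ t) (sinhRatio_le hγ₀.le hγ₁ t)

lemma q_eq_exp_mul_sinhRatio (α β u : ℝ) :
    q α β u = exp ((1 - α - β) / 2 * u) * sinhRatio (β - α) (u / 2) := by
  rcases eq_or_ne u 0 with rfl | hu
  · simp [q, sinhRatio]
  have hu2 : u / 2 ≠ 0 := div_ne_zero hu two_ne_zero
  have hden := exp_sub_exp_eq_mul_sinh 0 (-u)
  rw [exp_zero] at hden
  rw [q, if_neg hu, sinhRatio_of_ne_zero _ hu2, exp_sub_exp_eq_mul_sinh, hden,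
    show (-α * u - -β * u) / 2 = (β - α) * (u / 2) by ring, show (0 - -u) / 2 = u / 2 by ring,
    show (1 - α - β) / 2 * u = (-α * u + -β * u) / 2 - (0 + -u) / 2 by ring, exp_sub]
  have := sinh_ne_zero.2 hu2
  field_simp

theorem q_log_concave_general (α β : ℝ) (hαβ : α < β) (h1 : β - α < 1) :
    ConcaveOn ℝ Set.univ (fun u => Real.log (q α β u)) := by
  have hγ : 0 < β - α := sub_pos.2 hαβ
  have hlog : (fun u => log (q α β u))
      = fun u => (1 - α - β) / 2 * u + log (sinhRatio (β - α) (u / 2)) := by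
    funext u
    rw [q_eq_exp_mul_sinhRatio, log_mul (exp_ne_zero _) (sinhRatio_pos hγ _).ne', log_exp]
  rw [hlog]
  exact (LinearMap.concaveOn (LinearMap.mul ℝ ℝ ((1 - α - β) / 2)) convex_univ).add
    ((concaveOn_log_sinhRatio hγ h1.le).comp_linearMap (LinearMap.mulRight ℝ (2⁻¹ : ℝ)))

theorem q_log_concave (α β : ℝ) (hα : 0 ≤ α) (hαβ : α < β) (h1 : β - α < 1) :
    ConcaveOn ℝ Set.univ (fun u => Real.log (q α β u)) :=
  q_log_concave_general α β hαβ h1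
end

section
/- Let s, t ≥ 0 with |t - s| > 1. Then the function z(x) = [Γ(x+t)/Γ(x+s)]^{1/(t-s)} − x is concave on (0, ∞). -/
noncomputable def z (s t x : ℝ) : ℝ :=
  (Real.Gamma (x + t) / Real.Gamma (x + s)) ^ ((1 : ℝ) / (t - s)) - x

/-!
By Gauss's product formula, `z s t x + x` is the limit of `exp (g_n x)` with
`g_n x = (logGammaSeq (x + t) n - logGammaSeq (x + s) n) / (t - s)`. For `t - s ≥ 1` each
`exp ∘ g_n` is concave, because `g_n' ^ 2 + g_n'' ≤ 0` amounts to the inequality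
`(∑ (1/(b+j) - 1/(a+j)))² ≤ (a - b) ∑ (1/(b+j)² - 1/(a+j)²)` for `a - b ≥ 1`. That inequality is
proved by induction, splitting off the first term and bounding the remaining sum by comparison with
a telescoping series. Pointwise limits of concave functions are concave, and `z s t = z t s`
handles `s > t`.
-/

open Real BohrMollerup Finset Filter Topology

section SumInequality

variable {a b : ℝ}

theorem sum_inv_sub_inv_le (hb : 0 < b) (hab : 1 ≤ a - b) (n : ℕ) :
    ∑ j ∈ range n, ((b + 1 + j)⁻¹ - (a + 1 + j)⁻¹) ≤ (a - b) * (a + b - 1) / (2 * a * b) := by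
  have ha : 0 < a := by linarith
  have hL : 0 < a + b - 1 := by linarith
  set p := 2 * a * b / (a + b - 1) with hp
  have hp0 : 0 < p := by positivity
  have hp_le {y : ℝ} (hy : 0 ≤ y) : (p + y) * (p + y + 1) ≤ (b + 1 + y) * (a + 1 + y) := by
    rw [hp, div_add' _ _ _ hL.ne', div_add_one hL.ne', div_mul_div_comm, div_le_iff₀ (by positivity)]
    nlinarith [mul_nonneg hy (mul_nonneg hL.le (sub_nonneg.2 hab)),
      mul_nonneg hb.le (sub_nonneg.2 hab), mul_nonneg (mul_nonneg hb.le hb.le) (sub_nonneg.2 hab),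
      sq_nonneg (a - b), mul_nonneg hy hy]
  have hterm (j : ℕ) :
      (b + 1 + j)⁻¹ - (a + 1 + j)⁻¹ ≤ (a - b) * ((p + j)⁻¹ - (p + (j + 1 : ℕ))⁻¹) := by
    have hj : (0 : ℝ) ≤ j := j.cast_nonneg
    calc (b + 1 + j)⁻¹ - (a + 1 + j)⁻¹ = (a - b) * ((b + 1 + j) * (a + 1 + j))⁻¹ := by
          field_simp; ring
      _ ≤ (a - b) * ((p + j) * (p + j + 1))⁻¹ :=
          mul_le_mul_of_nonneg_left (inv_anti₀ (by positivity) (hp_le hj)) (by linarith)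
      _ = (a - b) * ((p + j)⁻¹ - (p + (j + 1 : ℕ))⁻¹) := by
          push_cast; field_simp; ring
  calc ∑ j ∈ range n, ((b + 1 + j)⁻¹ - (a + 1 + j)⁻¹)
      ≤ ∑ j ∈ range n, (a - b) * ((p + j)⁻¹ - (p + (j + 1 : ℕ))⁻¹) :=
        sum_le_sum fun j _ => hterm j
    _ = (a - b) * (p⁻¹ - (p + n)⁻¹) := by
        rw [← mul_sum, sum_range_sub' (fun j : ℕ => (p + j)⁻¹)]; simp
    _ ≤ (a - b) * p⁻¹ := by
        have : 0 ≤ (p + n)⁻¹ := by positivity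
        gcongr; linarith
    _ = (a - b) * (a + b - 1) / (2 * a * b) := by rw [hp, inv_div]; ring

theorem sq_sum_inv_sub_inv_le (n : ℕ) (hb : 0 < b) (hab : 1 ≤ a - b) :
    (∑ j ∈ range n, ((b + j)⁻¹ - (a + j)⁻¹)) ^ 2
      ≤ (a - b) * ∑ j ∈ range n, (((b + j) ^ 2)⁻¹ - ((a + j) ^ 2)⁻¹) := by
  induction n generalizing a b with
  | zero => simp
  | succ n ih =>
    have ha : 0 < a := by linarith
    set A := ∑ j ∈ range n, ((b + 1 + j)⁻¹ - (a + 1 + j)⁻¹)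
    set B := ∑ j ∈ range n, (((b + 1 + j) ^ 2)⁻¹ - ((a + 1 + j) ^ 2)⁻¹)
    set d := b⁻¹ - a⁻¹ with hd_def
    have hA : ∑ j ∈ range (n + 1), ((b + j)⁻¹ - (a + j)⁻¹) = A + d := by
      rw [sum_range_succ']
      congr 1
      · exact sum_congr rfl fun j _ => by push_cast; ring_nf
      · simp [d]
    have hB : ∑ j ∈ range (n + 1), (((b + j) ^ 2)⁻¹ - ((a + j) ^ 2)⁻¹)
        = B + ((b ^ 2)⁻¹ - (a ^ 2)⁻¹) := by
      rw [sum_range_succ']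
      congr 1
      · exact sum_congr rfl fun j _ => by push_cast; ring_nf
      · simp
    have hAB : A ^ 2 ≤ (a - b) * B := by
      have := ih (a := a + 1) (b := b + 1) (by linarith) (by linarith)
      rwa [add_sub_add_right_eq_sub] at this
    have hd : 0 ≤ d := sub_nonneg.2 (inv_anti₀ hb (by linarith))
    have hAT := mul_le_mul_of_nonneg_right (sum_inv_sub_inv_le hb hab n) hd
    -- the tail bound of `sum_inv_sub_inv_le` is chosen to make this an identity
    have hstep : 2 * ((a - b) * (a + b - 1) / (2 * a * b)) * d + d ^ 2
        = (a - b) * ((b ^ 2)⁻¹ - (a ^ 2)⁻¹) := by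
      rw [hd_def]; field_simp; ring
    rw [hA, hB]
    nlinarith

end SumInequality

theorem ConcaveOn.of_tendsto {ι E : Type*} [AddCommMonoid E] [Module ℝ E] {l : Filter ι} [l.NeBot]
    {s : Set E} {F : ι → E → ℝ} {f : E → ℝ} (hF : ∀ᶠ i in l, ConcaveOn ℝ s (F i))
    (hf : ∀ x ∈ s, Tendsto (fun i => F i x) l (𝓝 (f x))) : ConcaveOn ℝ s f := by
  obtain ⟨i, hi⟩ := hF.exists
  refine ⟨hi.1, fun x hx y hy a b ha hb hab => ?_⟩
  exact le_of_tendsto_of_tendsto (((hf x hx).const_mul a).add ((hf y hy).const_mul b))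
    (hf _ (hi.1 hx hy ha hb hab)) (hF.mono fun i hi => hi.2 hx hy ha hb hab)

theorem concaveOn_exp_comp {D : Set ℝ} (hD : Convex ℝ D) (hDo : IsOpen D) {g g' g'' : ℝ → ℝ}
    (hg : ∀ x ∈ D, HasDerivAt g (g' x) x) (hg' : ∀ x ∈ D, HasDerivAt g' (g'' x) x)
    (h : ∀ x ∈ D, g' x ^ 2 + g'' x ≤ 0) : ConcaveOn ℝ D fun x => exp (g x) := by
  refine concaveOn_of_hasDerivWithinAt2_nonpos hD (f' := fun x => exp (g x) * g' x)
    (f'' := fun x => exp (g x) * (g' x ^ 2 + g'' x))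
    (fun x hx => (hg x hx).exp.continuousAt.continuousWithinAt) ?_ ?_ ?_ <;>
    rw [hDo.interior_eq] <;> intro x hx
  · exact (hg x hx).exp.hasDerivWithinAt
  · exact (((hg x hx).exp.mul (hg' x hx)).congr_deriv (by ring)).hasDerivWithinAt
  · exact mul_nonpos_of_nonneg_of_nonpos (exp_pos _).le (h x hx)

theorem hasDerivAt_logGammaSeq {x : ℝ} (hx : 0 < x) (n : ℕ) :
    HasDerivAt (logGammaSeq · n) (log n - ∑ m ∈ range (n + 1), (x + m)⁻¹) x := by
  have hlog : HasDerivAt (fun y => ∑ m ∈ range (n + 1), log (y + m))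
      (∑ m ∈ range (n + 1), (x + m)⁻¹) x :=
    HasDerivAt.fun_sum fun m _ => by
      simpa using ((hasDerivAt_id x).add_const (m : ℝ)).log (by positivity)
  exact (((hasDerivAt_id x).mul_const (log n)).add_const _).fun_sub hlog |>.congr_deriv (by simp)

theorem hasDerivAt_sum_inv {x : ℝ} (hx : 0 < x) (n : ℕ) :
    HasDerivAt (fun y : ℝ => ∑ m ∈ range n, (y + m)⁻¹) (-∑ m ∈ range n, ((x + m) ^ 2)⁻¹) x := by
  rw [← sum_neg_distrib]
  exact HasDerivAt.fun_sum fun m _ => by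
    simpa [neg_div] using ((hasDerivAt_id x).add_const (m : ℝ)).fun_inv (by positivity)

theorem concaveOn_exp_logGammaSeq_sub_div {s t : ℝ} (hst : 1 ≤ t - s) (n : ℕ) :
    ConcaveOn ℝ (Set.Ioi (-s))
      fun x => exp ((logGammaSeq (x + t) n - logGammaSeq (x + s) n) / (t - s)) := by
  set S₁ : ℝ → ℝ := fun y => ∑ m ∈ range (n + 1), (y + m)⁻¹
  set S₂ : ℝ → ℝ := fun y => ∑ m ∈ range (n + 1), ((y + m) ^ 2)⁻¹
  refine concaveOn_exp_comp (convex_Ioi _) isOpen_Ioi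
    (g' := fun x => (S₁ (x + s) - S₁ (x + t)) / (t - s))
    (g'' := fun x => (S₂ (x + t) - S₂ (x + s)) / (t - s)) (fun x hx => ?_) (fun x hx => ?_)
    (fun x hx => ?_)
  all_goals
    have hxs : 0 < x + s := neg_lt_iff_pos_add.1 hx
    have hxt : 0 < x + t := by linarith
  · exact (((hasDerivAt_logGammaSeq hxt n).comp_add_const x t).sub
      ((hasDerivAt_logGammaSeq hxs n).comp_add_const x s)).div_const (t - s) |>.congr_deriv (by ring)
  · exact (((hasDerivAt_sum_inv hxs (n + 1)).comp_add_const x s).sub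
      ((hasDerivAt_sum_inv hxt (n + 1)).comp_add_const x t)).div_const (t - s) |>.congr_deriv (by ring)
  · have key := sq_sum_inv_sub_inv_le (n + 1) hxs (by rwa [add_sub_add_left_eq_sub])
    rw [sum_sub_distrib, sum_sub_distrib, add_sub_add_left_eq_sub] at key
    field_simp
    nlinarith

theorem tendsto_exp_logGammaSeq_sub_div {x y : ℝ} (hx : 0 < x) (hy : 0 < y) (c : ℝ) :
    Tendsto (fun n => exp ((logGammaSeq y n - logGammaSeq x n) / c)) atTop
      (𝓝 ((Gamma y / Gamma x) ^ (1 / c))) := by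
  rw [rpow_def_of_pos (div_pos (Gamma_pos_of_pos hy) (Gamma_pos_of_pos hx)),
    log_div (Gamma_pos_of_pos hy).ne' (Gamma_pos_of_pos hx).ne', ← div_eq_mul_one_div]
  exact (((tendsto_log_gamma hy).sub (tendsto_log_gamma hx)).div_const c).rexp

theorem z_concaveOn_Ioi_neg {s t : ℝ} (hst : 1 ≤ t - s) : ConcaveOn ℝ (Set.Ioi (-s)) (z s t) :=
  ConcaveOn.of_tendsto (l := atTop)
    (.of_forall fun n => (concaveOn_exp_logGammaSeq_sub_div hst n).sub (convexOn_id (convex_Ioi _)))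
    fun x hx => by
      have hxs : 0 < x + s := neg_lt_iff_pos_add.1 hx
      exact (tendsto_exp_logGammaSeq_sub_div hxs (by linarith) (t - s)).sub_const x

theorem z_comm {s t x : ℝ} (hxs : 0 < x + s) (hxt : 0 < x + t) : z s t x = z t s x := by
  have hΓ := (div_pos (Gamma_pos_of_pos hxs) (Gamma_pos_of_pos hxt)).le
  rw [z, z, ← inv_div, inv_rpow hΓ, ← rpow_neg hΓ, ← one_div_neg_eq_neg_one_div, neg_sub]

theorem z_concave (s t : ℝ) (hs : 0 ≤ s) (ht : 0 ≤ t) (h1 : 1 < |t - s|) :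
    ConcaveOn ℝ (Set.Ioi 0) (z s t) := by
  wlog hst : 1 ≤ t - s generalizing s t
  · have hts : 1 ≤ s - t := by
      rcases lt_abs.1 h1 with h | h <;> linarith
    refine (this t s ht hs (by rwa [abs_sub_comm]) hts).congr fun x hx => z_comm ?_ ?_ <;>
      linarith [Set.mem_Ioi.1 hx]
  exact (z_concaveOn_Ioi_neg hst).subset (Set.Ioi_subset_Ioi (by linarith)) (convex_Ioi 0)
end

section
/- Let s, t ≥ 0 with s ≠ t and define z(x) = [Γ(x+t)/Γ(x+s)]^{1/(t-s)} − x. Then lim_{x→∞} z'(x) = 0; equivalently, lim_{x→∞} [Γ(x+t)/Γ(x+s)]^{1/(t-s)}·(ψ(x+t) − ψ(x+s))/(t−s) = 1. -/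
noncomputable def psi (x : ℝ) : ℝ := deriv (fun y => Real.log (Real.Gamma y)) x

/-!
Write `L = log ∘ Γ`; it is convex on `(0, ∞)` and `L (x + 1) = L x + log x`. Convexity traps
`ψ = L'` between `log x - 1/x` and `log x`, and traps the slope of `L` on `[x + s, x + t]`, which
is the logarithm of `(Γ(x+t)/Γ(x+s))^(1/(t-s))`, between `ψ (x + s)` and `ψ (x + t)`; so that
power is `x (1 + o(1))`.

The derivative of `z` is that power times `(ψ(x+t) - ψ(x+s))/(t-s)`, minus `1`, so it remains to
see `ψ (x + a) - ψ x = a/x + o(1/x)`. This follows from `ψ x = log x - 1/(2x) + O(x⁻²)`: by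
`ψ (x + 1) = ψ x + 1/x` and the Taylor expansion of `log (1 + 1/x)`, the remainder changes by
`O(x⁻³)` from `x` to `x + 1`, and it tends to `0`, so it is bounded by the tail sum `O(x⁻²)`.
-/

open Real Filter Topology Finset

lemma hasDerivAt_log_Gamma {x : ℝ} (hx : 0 < x) :
    HasDerivAt (fun y => log (Gamma y)) (psi x) x :=
  ((differentiableAt_Gamma fun m => ((neg_nonpos.2 m.cast_nonneg).trans_lt hx).ne').log
    (Gamma_pos_of_pos hx).ne').hasDerivAt

lemma psi_add_one {x : ℝ} (hx : 0 < x) : psi (x + 1) = psi x + x⁻¹ := by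
  have hshift : HasDerivAt (fun y => log (Gamma (y + 1))) (psi (x + 1)) x :=
    (hasDerivAt_log_Gamma (by linarith)).comp_add_const x 1
  have hrec : (fun y => log (Gamma (y + 1))) =ᶠ[𝓝 x] fun y => log (Gamma y) + log y := by
    filter_upwards [lt_mem_nhds hx] with y hy
    rw [Gamma_add_one hy.ne', log_mul hy.ne' (Gamma_pos_of_pos hy).ne', add_comm]
  exact hshift.unique
    (((hasDerivAt_log_Gamma hx).add (hasDerivAt_log hx.ne')).congr_of_eventuallyEq hrec)

lemma psi_le_slope_log_Gamma {a b : ℝ} (ha : 0 < a) (hab : a < b) :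
    psi a ≤ slope (log ∘ Gamma) a b :=
  convexOn_log_Gamma.deriv_le_slope ha (ha.trans hab) hab
    (hasDerivAt_log_Gamma ha).differentiableAt

lemma slope_log_Gamma_le_psi {a b : ℝ} (ha : 0 < a) (hab : a < b) :
    slope (log ∘ Gamma) a b ≤ psi b :=
  convexOn_log_Gamma.slope_le_deriv ha (ha.trans hab) hab
    (hasDerivAt_log_Gamma (ha.trans hab)).differentiableAt

lemma slope_log_Gamma_add_one {x : ℝ} (hx : 0 < x) : slope (log ∘ Gamma) x (x + 1) = log x := by
  rw [slope_def_field, Function.comp_apply, Function.comp_apply, Gamma_add_one hx.ne',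
    log_mul hx.ne' (Gamma_pos_of_pos hx).ne']
  ring

lemma psi_le_log {x : ℝ} (hx : 0 < x) : psi x ≤ log x :=
  slope_log_Gamma_add_one hx ▸ psi_le_slope_log_Gamma hx (lt_add_one x)

lemma log_sub_inv_le_psi {x : ℝ} (hx : 0 < x) : log x - x⁻¹ ≤ psi x := by
  have h := slope_log_Gamma_add_one hx ▸ slope_log_Gamma_le_psi hx (lt_add_one x)
  rw [psi_add_one hx] at h
  linarith

lemma abs_log_one_add_sub_le {u : ℝ} (hu : |u| ≤ 1 / 2) :
    |log (1 + u) - (u - u ^ 2 / 2)| ≤ 2 * |u| ^ 3 := by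
  have h := abs_log_sub_add_sum_range_le (x := -u) (by rw [abs_neg]; linarith) 2
  have e : log (1 + u) - (u - u ^ 2 / 2) =
      (∑ i ∈ range 2, (-u) ^ (i + 1) / (i + 1)) + log (1 - -u) := by
    norm_num [sum_range_succ]
    ring
  rw [e]
  refine h.trans ?_
  rw [abs_neg, div_le_iff₀ (by linarith), pow_succ]
  nlinarith [mul_nonneg (pow_nonneg (abs_nonneg u) 3) (sub_nonneg.2 hu)]

noncomputable def psiRemainder (x : ℝ) : ℝ := psi x - log x + (2 * x)⁻¹

lemma abs_psiRemainder_le_inv {x : ℝ} (hx : 0 < x) : |psiRemainder x| ≤ (2 * x)⁻¹ := by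
  have hupper := psi_le_log hx
  have hlower := log_sub_inv_le_psi hx
  have hinv : x⁻¹ = 2 * (2 * x)⁻¹ := by field_simp
  rw [abs_le, psiRemainder]
  constructor <;> linarith

lemma tendsto_psiRemainder_atTop : Tendsto psiRemainder atTop (𝓝 0) :=
  squeeze_zero_norm' ((eventually_gt_atTop 0).mono fun _ hx => abs_psiRemainder_le_inv hx)
    (tendsto_inv_atTop_zero.comp (tendsto_id.const_mul_atTop two_pos))

lemma abs_psiRemainder_add_one_sub_le {x : ℝ} (hx : 2 ≤ x) :
    |psiRemainder (x + 1) - psiRemainder x| ≤ 3 * (x ^ 3)⁻¹ := by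
  have hx0 : 0 < x := by linarith
  have hu : |x⁻¹| ≤ 1 / 2 := by
    rw [abs_inv, abs_of_pos hx0]
    exact inv_le_of_inv_le₀ (by norm_num) (by linarith)
  have hlog : log (x + 1) = log x + log (1 + x⁻¹) := by
    rw [← log_mul hx0.ne' (by positivity)]
    congr 1
    field_simp
  have hsplit : psiRemainder (x + 1) - psiRemainder x =
      (2 * x ^ 2 * (x + 1))⁻¹ - (log (1 + x⁻¹) - (x⁻¹ - x⁻¹ ^ 2 / 2)) := by
    rw [psiRemainder, psiRemainder, psi_add_one hx0, hlog]
    field_simp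
    ring
  have hrat : (2 * x ^ 2 * (x + 1))⁻¹ ≤ (x ^ 3)⁻¹ := by
    gcongr
    nlinarith
  have htaylor := abs_log_one_add_sub_le hu
  rw [abs_inv, abs_of_pos hx0] at htaylor
  rw [hsplit]
  refine (abs_sub _ _).trans ?_
  rw [abs_of_pos (by positivity)]
  linarith [inv_pow x 3]

lemma sum_range_inv_add_pow_three_le {x : ℝ} (hx : 1 < x) (n : ℕ) :
    ∑ k ∈ range n, ((x + k) ^ 3)⁻¹ ≤ (2 * ((x - 1) * x))⁻¹ := by
  set g : ℕ → ℝ := fun k => (2 * ((x + k - 1) * (x + k)))⁻¹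
  -- `y⁻³ ≤ ((y-1)y)⁻¹/2 - (y(y+1))⁻¹/2`, because the right side is `(y(y²-1))⁻¹`
  have hterm : ∀ k : ℕ, ((x + k) ^ 3)⁻¹ ≤ g k - g (k + 1) := by
    intro k
    have hy : 1 < x + k := by linarith [(k.cast_nonneg : (0 : ℝ) ≤ k)]
    simp only [g]
    push_cast
    rw [show x + (k + 1) - 1 = x + k by ring]
    have hy0 : 0 < x + k - 1 := by linarith
    rw [inv_le_iff_one_le_mul₀ (by positivity)]
    field_simp
    nlinarith
  have hg : 0 ≤ g n := by
    have : 0 < x + n - 1 := by linarith [(n.cast_nonneg : (0 : ℝ) ≤ n)]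
    simp only [g]
    positivity
  calc ∑ k ∈ range n, ((x + k) ^ 3)⁻¹ ≤ ∑ k ∈ range n, (g k - g (k + 1)) :=
        sum_le_sum fun k _ => hterm k
    _ = g 0 - g n := sum_range_sub' g n
    _ ≤ g 0 := sub_le_self _ hg
    _ = (2 * ((x - 1) * x))⁻¹ := by simp [g]

lemma abs_psiRemainder_le {x : ℝ} (hx : 2 ≤ x) :
    |psiRemainder x| ≤ 3 * (2 * ((x - 1) * x))⁻¹ := by
  set d : ℕ → ℝ := fun n => 3 * ((x + n) ^ 3)⁻¹
  have hx_add (n : ℕ) : 2 ≤ x + n := by linarith [(n.cast_nonneg : (0 : ℝ) ≤ n)]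
  have hd_nonneg (n : ℕ) : 0 ≤ d n := by
    simp only [d]
    positivity
  have hd_sum (n : ℕ) : ∑ k ∈ range n, d k ≤ 3 * (2 * ((x - 1) * x))⁻¹ := by
    rw [← mul_sum]
    gcongr
    exact sum_range_inv_add_pow_three_le (by linarith) n
  have hdist (n : ℕ) : dist (psiRemainder (x + n)) (psiRemainder (x + n.succ)) ≤ d n := by
    rw [dist_comm, dist_eq_norm, Nat.cast_succ, ← add_assoc]
    exact abs_psiRemainder_add_one_sub_le (hx_add n)
  have htail : Tendsto (fun n : ℕ => psiRemainder (x + n)) atTop (𝓝 0) :=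
    tendsto_psiRemainder_atTop.comp
      (tendsto_atTop_add_const_left _ x tendsto_natCast_atTop_atTop)
  have h := dist_le_tsum_of_dist_le_of_tendsto₀ d hdist
    (summable_of_sum_range_le hd_nonneg hd_sum) htail
  rw [Nat.cast_zero, add_zero, dist_zero_right] at h
  exact h.trans (Real.tsum_le_of_sum_range_le hd_nonneg hd_sum)

lemma tendsto_mul_psiRemainder_atTop :
    Tendsto (fun x => x * psiRemainder x) atTop (𝓝 0) := by
  have hbound : ∀ᶠ x in atTop, ‖x * psiRemainder x‖ ≤ 3 / 2 * (x - 1)⁻¹ := by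
    filter_upwards [eventually_ge_atTop 2] with x hx
    have hx0 : 0 < x := by linarith
    rw [norm_mul, norm_of_nonneg hx0.le, Real.norm_eq_abs]
    calc x * |psiRemainder x| ≤ x * (3 * (2 * ((x - 1) * x))⁻¹) := by
          gcongr
          exact abs_psiRemainder_le hx
      _ = 3 / 2 * (x - 1)⁻¹ := by field_simp
  refine squeeze_zero_norm' hbound ?_
  simpa [sub_eq_add_neg] using (tendsto_inv_atTop_zero.comp
    (tendsto_atTop_add_const_right _ (-1) tendsto_id)).const_mul (3 / 2 : ℝ)

lemma tendsto_mul_psiRemainder_add_atTop (a : ℝ) :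
    Tendsto (fun x => x * psiRemainder (x + a)) atTop (𝓝 0) := by
  have hshift : Tendsto (fun x : ℝ => x + a) atTop atTop :=
    tendsto_atTop_add_const_right _ a tendsto_id
  have h := (tendsto_mul_psiRemainder_atTop.comp hshift).sub
    ((tendsto_psiRemainder_atTop.comp hshift).const_mul a)
  rw [mul_zero, sub_zero] at h
  refine h.congr fun x => ?_
  simp only [Function.comp_apply]
  ring

lemma tendsto_mul_psi_add_sub_psi (a : ℝ) :
    Tendsto (fun x => x * (psi (x + a) - psi x)) atTop (𝓝 a) := by
  have hrat : Tendsto (fun x => a / (2 * (x + a))) atTop (𝓝 0) :=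
    ((tendsto_atTop_add_const_right _ a tendsto_id).const_mul_atTop two_pos).const_div_atTop a
  have h := (((tendsto_mul_log_one_add_div_atTop a).add hrat).add
    (tendsto_mul_psiRemainder_add_atTop a)).sub tendsto_mul_psiRemainder_atTop
  rw [add_zero, add_zero, sub_zero] at h
  refine h.congr' ?_
  filter_upwards [eventually_gt_atTop 0, eventually_gt_atTop (-a)] with x hx hxa
  have hlog : log (1 + a / x) = log (x + a) - log x := by
    rw [← log_div (by linarith) hx.ne', add_div, div_self hx.ne']
  have hxa' : x + a ≠ 0 := (neg_lt_iff_pos_add.1 hxa).ne'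
  rw [hlog, psiRemainder, psiRemainder]
  field_simp
  ring

lemma tendsto_mul_psi_add_sub_psi_add (s t : ℝ) :
    Tendsto (fun x => x * (psi (x + t) - psi (x + s))) atTop (𝓝 (t - s)) :=
  ((tendsto_mul_psi_add_sub_psi t).sub (tendsto_mul_psi_add_sub_psi s)).congr fun x => by ring

lemma tendsto_psi_add_sub_log (a : ℝ) :
    Tendsto (fun x => psi (x + a) - log x) atTop (𝓝 0) := by
  have h := ((tendsto_mul_psi_add_sub_psi a).mul tendsto_inv_atTop_zero).add
    (tendsto_psiRemainder_atTop.sub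
      (tendsto_inv_atTop_zero.comp (tendsto_id.const_mul_atTop two_pos)))
  rw [mul_zero, sub_zero, zero_add] at h
  refine h.congr' ?_
  filter_upwards [eventually_ne_atTop 0] with x hx
  simp only [Function.comp_apply, id, psiRemainder]
  field_simp
  ring

lemma div_rpow_one_div_sub_eq_exp_slope {f : ℝ → ℝ} {a b : ℝ}
    (ha : 0 < f a) (hb : 0 < f b) :
    (f b / f a) ^ (1 / (b - a)) = exp (slope (log ∘ f) a b) := by
  rw [rpow_def_of_pos (div_pos hb ha), log_div hb.ne' ha.ne', slope_def_field, mul_one_div]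
  rfl

lemma tendsto_slope_log_Gamma_sub_log {s t : ℝ} (hst : s ≠ t) :
    Tendsto (fun x => slope (log ∘ Gamma) (x + s) (x + t) - log x) atTop (𝓝 0) := by
  wlog hlt : s < t generalizing s t
  · simpa only [slope_comm] using this hst.symm (hst.lt_or_gt.resolve_left hlt)
  refine tendsto_of_tendsto_of_tendsto_of_le_of_le' (tendsto_psi_add_sub_log s)
    (tendsto_psi_add_sub_log t) ?_ ?_ <;>
    filter_upwards [eventually_gt_atTop (-s)] with x hx <;>
    gcongr
  · exact psi_le_slope_log_Gamma (by linarith) (by linarith)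
  · exact slope_log_Gamma_le_psi (by linarith) (by linarith)

lemma tendsto_Gamma_div_rpow_div_self {s t : ℝ} (hst : s ≠ t) :
    Tendsto (fun x => (Gamma (x + t) / Gamma (x + s)) ^ ((1 : ℝ) / (t - s)) / x)
      atTop (𝓝 1) := by
  have h := (continuous_exp.tendsto 0).comp (tendsto_slope_log_Gamma_sub_log hst)
  rw [exp_zero] at h
  refine h.congr' ?_
  filter_upwards [eventually_gt_atTop 0, eventually_gt_atTop (-s), eventually_gt_atTop (-t)]
    with x hx hxs hxt
  rw [Function.comp_apply, exp_sub, exp_log hx, ← add_sub_add_left_eq_sub t s x,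
    div_rpow_one_div_sub_eq_exp_slope (Gamma_pos_of_pos (by linarith))
      (Gamma_pos_of_pos (by linarith))]

lemma hasDerivAt_z {s t x : ℝ} (hxs : 0 < x + s) (hxt : 0 < x + t) :
    HasDerivAt (z s t) ((Gamma (x + t) / Gamma (x + s)) ^ ((1 : ℝ) / (t - s)) *
      (psi (x + t) - psi (x + s)) / (t - s) - 1) x := by
  have hexp {y : ℝ} (hys : 0 < y + s) (hyt : 0 < y + t) :
      (Gamma (y + t) / Gamma (y + s)) ^ ((1 : ℝ) / (t - s)) =
        exp ((log (Gamma (y + t)) - log (Gamma (y + s))) / (t - s)) := by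
    rw [← add_sub_add_left_eq_sub t s y, div_rpow_one_div_sub_eq_exp_slope
      (Gamma_pos_of_pos hys) (Gamma_pos_of_pos hyt), slope_def_field]
    rfl
  have hz : z s t =ᶠ[𝓝 x]
      fun y => exp ((log (Gamma (y + t)) - log (Gamma (y + s))) / (t - s)) - y := by
    filter_upwards [lt_mem_nhds (by linarith : -s < x), lt_mem_nhds (by linarith : -t < x)]
      with y hys hyt
    rw [z, hexp (by linarith) (by linarith)]
  have hderiv := ((((hasDerivAt_log_Gamma hxt).comp_add_const x t).sub
    ((hasDerivAt_log_Gamma hxs).comp_add_const x s)).div_const (t - s)).exp.sub (hasDerivAt_id x)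
  rw [hexp hxs hxt, mul_div_assoc]
  exact hderiv.congr_of_eventuallyEq hz

lemma tendsto_Gamma_div_rpow_mul_psi_sub_psi {s t : ℝ} (hst : s ≠ t) :
    Tendsto (fun x => (Gamma (x + t) / Gamma (x + s)) ^ ((1 : ℝ) / (t - s)) *
      (psi (x + t) - psi (x + s)) / (t - s)) atTop (𝓝 1) := by
  have h := (tendsto_Gamma_div_rpow_div_self hst).mul
    ((tendsto_mul_psi_add_sub_psi_add s t).div_const (t - s))
  rw [one_mul, div_self (sub_ne_zero.2 hst.symm)] at h
  refine h.congr' ?_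
  filter_upwards [eventually_ne_atTop 0] with x hx
  field_simp

theorem z_deriv_tendsto_zero_general (s t : ℝ) (hst : s ≠ t) :
    Filter.Tendsto (fun x => deriv (z s t) x) Filter.atTop (nhds 0) ∧
    Filter.Tendsto
      (fun x => (Real.Gamma (x + t) / Real.Gamma (x + s)) ^ ((1 : ℝ) / (t - s)) *
        (psi (x + t) - psi (x + s)) / (t - s))
      Filter.atTop (nhds 1) := by
  have hlim := tendsto_Gamma_div_rpow_mul_psi_sub_psi hst
  refine ⟨?_, hlim⟩
  have h := hlim.sub_const 1
  rw [sub_self] at h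
  refine h.congr' ?_
  filter_upwards [eventually_gt_atTop (-s), eventually_gt_atTop (-t)] with x hxs hxt
  exact (hasDerivAt_z (by linarith) (by linarith)).deriv.symm

theorem z_deriv_tendsto_zero (s t : ℝ) (hs : 0 ≤ s) (ht : 0 ≤ t) (hst : s ≠ t) :
    Filter.Tendsto (fun x => deriv (z s t) x) Filter.atTop (nhds 0) ∧
    Filter.Tendsto
      (fun x => (Real.Gamma (x + t) / Real.Gamma (x + s)) ^ ((1 : ℝ) / (t - s)) *
        (psi (x + t) - psi (x + s)) / (t - s))
      Filter.atTop (nhds 1) :=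
  z_deriv_tendsto_zero_general s t hst
end
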